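/- arXiv:1208.3058 — 2 statements merged into one kernel-verified Lean document; each statement's English description precedes it below -/
import Mathlib

section
/- Let x ∈ ℓ¹ be nonincreasing in absolute value from some index on, with |x(n)| > ∑_{i>n}|x(i)| for infinitely many n. Then E(x) is not a finite union of closed intervals. -/
open Set Filter Topology

/-- The achievement set (set of all subsums) of a series `∑ x n`. -/
noncomputable def achSet (x : ℕ → ℝ) : Set ℝ :=
  {a : ℝ | ∃ A : Set ℕ, HasSum (fun n : A => x n) a}

/-- The tail sum `∑_{i > n} |x i|`. -/
noncomputable def tailSum (x : ℕ → ℝ) (n : ℕ) : ℝ := ∑' i : ℕ, |x (n + 1 + i)|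

/-- `S` is a finite union of closed intervals. -/
def IsFinUnionClosedIntervals (S : Set ℝ) : Prop :=
  ∃ s : Finset (ℝ × ℝ), S = ⋃ p ∈ s, Set.Icc p.1 p.2

/-- `S` is homeomorphic to the Cantor set (the Cantor space `ℕ → Bool`). -/
def CantorLike (S : Set ℝ) : Prop := Nonempty (S ≃ₜ (ℕ → Bool))

/-!
Flipping the signs of the negative terms shows `E(x) = M - E(|x|)` with `M` the sum of the
positive terms, so it suffices to treat `E(|x|)`. There the tail sum `t n = ∑_{i>n} |x i|` is a
subsum, and once `|x n|` is at most every nonzero earlier term, a subsum either uses a nonzero term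
of index `≤ n` (and is `≥ |x n|`) or not (and is `≤ t n`). Whenever `t n < |x n|` the interval
`(t n, |x n|)` is therefore a gap of `E(|x|)` to the right of the point `t n`, which produces
infinitely many right-isolated points, whereas a finite union of closed intervals has only finitely
many: the right endpoints of its intervals.
-/

def rightIsolatedPoints (S : Set ℝ) : Set ℝ :=
  {a ∈ S | ∃ b > a, Disjoint (Ioo a b) S}

namespace IsFinUnionClosedIntervals

variable {S : Set ℝ}

theorem image_const_sub (hS : IsFinUnionClosedIntervals S) (c : ℝ) :
    IsFinUnionClosedIntervals ((fun a => c - a) '' S) := by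
  obtain ⟨s, rfl⟩ := hS
  refine ⟨s.image fun p => (c - p.2, c - p.1), ?_⟩
  simp only [image_iUnion₂, image_const_sub_Icc, Finset.set_biUnion_finset_image]

theorem finite_rightIsolatedPoints (hS : IsFinUnionClosedIntervals S) :
    (rightIsolatedPoints S).Finite := by
  obtain ⟨s, rfl⟩ := hS
  refine (s.image Prod.snd).finite_toSet.subset ?_
  rintro a ⟨ha, b, hab, hgap⟩
  obtain ⟨p, hp, hpa, hap⟩ := mem_iUnion₂.1 ha
  refine Finset.mem_coe.2 (Finset.mem_image.2 ⟨p, hp, le_antisymm (not_lt.1 fun hlt => ?_) hap⟩)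
  have hmid : a < (a + min b p.2) / 2 ∧ (a + min b p.2) / 2 < min b p.2 := by
    constructor <;> linarith [lt_min hab hlt]
  refine disjoint_left.1 hgap ⟨hmid.1, hmid.2.trans_le (min_le_left _ _)⟩
    (mem_iUnion₂.2 ⟨p, hp, hpa.trans hmid.1.le, (hmid.2.trans_le (min_le_right _ _)).le⟩)

end IsFinUnionClosedIntervals

theorem eventually_le_of_ne_zero {y : ℕ → ℝ} (hy : 0 ≤ y) (h0 : Tendsto y atTop (𝓝 0))
    (hmono : ∀ᶠ n in atTop, y (n + 1) ≤ y n) :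
    ∀ᶠ n in atTop, ∀ i ≤ n, y i ≠ 0 → y n ≤ y i := by
  obtain ⟨N, hN⟩ := eventually_atTop.1 hmono
  have hsmall : ∀ᶠ n in atTop, ∀ i ∈ Finset.range N, y i ≠ 0 → y n ≤ y i := by
    refine (eventually_all_finset _).2 fun i _ => ?_
    rcases (hy i).eq_or_lt with hi | hi
    · exact Eventually.of_forall fun _ h => (h hi.symm).elim
    · exact (h0.eventually_lt_const hi).mono fun _ hn _ => hn.le
  filter_upwards [hsmall, eventually_ge_atTop N] with n hsmall hn i hin hi
  rcases lt_or_ge i N with h | h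
  · exact hsmall i (Finset.mem_range.2 h) hi
  · exact antitoneOn_nat_Ici_of_succ_le hN h hn hin

variable {x : ℕ → ℝ}

theorem mem_achSet_iff (hx : Summable x) {a : ℝ} :
    a ∈ achSet x ↔ ∃ A : Set ℕ, ∑' i : A, x i = a :=
  ⟨fun ⟨A, h⟩ => ⟨A, h.tsum_eq⟩, fun ⟨A, h⟩ => ⟨A, h ▸ (hx.subtype A).hasSum⟩⟩

theorem tsum_subtype_add_tsum_symmDiff_abs (hx : Summable fun n => |x n|) (B : Set ℕ) :
    ∑' i : B, x i + ∑' i : ↥(symmDiff {i | 0 < x i} B), |x i| = ∑' i : {i | 0 < x i}, x i := by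
  rw [tsum_subtype B x, tsum_subtype _ (fun i => |x i|), tsum_subtype]
  rw [← ((summable_abs_iff.1 hx).indicator B).tsum_add (hx.indicator _)]
  congr 1
  funext i
  by_cases hP : 0 < x i <;> by_cases hB : i ∈ B <;>
    simp [indicator, mem_symmDiff, hP, hB, abs_of_pos, abs_of_nonpos, not_lt.1]

theorem achSet_abs_eq_image (hx : Summable fun n => |x n|) :
    achSet (fun n => |x n|) = (fun a => (∑' i : {i | 0 < x i}, x i) - a) '' achSet x := by
  ext b
  simp only [mem_image, mem_achSet_iff hx, mem_achSet_iff (summable_abs_iff.1 hx)]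
  constructor
  · rintro ⟨C, rfl⟩
    refine ⟨_, ⟨symmDiff {i | 0 < x i} C, rfl⟩, ?_⟩
    have h := tsum_subtype_add_tsum_symmDiff_abs hx (symmDiff {i | 0 < x i} C)
    rw [symmDiff_symmDiff_cancel_left] at h
    linarith
  · rintro ⟨_, ⟨A, rfl⟩, rfl⟩
    exact ⟨_, by linarith [tsum_subtype_add_tsum_symmDiff_abs hx A]⟩

theorem hasSum_tailSum (hx : Summable fun n => |x n|) (n : ℕ) :
    HasSum (fun i : Ioi n => |x i|) (tailSum x n) := by
  have hrange : Ioi n = range (n + 1 + ·) := by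
    ext i
    simp only [mem_Ioi, mem_range]
    exact ⟨fun h => ⟨i - (n + 1), by omega⟩, by rintro ⟨k, rfl⟩; omega⟩
  rw [hrange, (add_right_injective (n + 1)).hasSum_range_iff (f := fun i => |x i|)]
  exact (hx.comp_injective (add_right_injective (n + 1))).hasSum

theorem abs_le_tailSum (hx : Summable fun n => |x n|) {m n : ℕ} (h : m < n) :
    |x n| ≤ tailSum x m :=
  le_hasSum (hasSum_tailSum hx m) ⟨n, h⟩ fun _ _ => abs_nonneg _

theorem disjoint_Ioo_tailSum_achSet_abs (hx : Summable fun n => |x n|) {n : ℕ}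
    (hn : ∀ i ≤ n, |x i| ≠ 0 → |x n| ≤ |x i|) :
    Disjoint (Ioo (tailSum x n) |x n|) (achSet fun i => |x i|) := by
  rw [disjoint_left]
  rintro a ⟨hlo, hhi⟩ ⟨A, hA⟩
  by_cases hearly : ∃ i ∈ A, i ≤ n ∧ |x i| ≠ 0
  · obtain ⟨i, hiA, hin, hi⟩ := hearly
    linarith [hn i hin hi, le_hasSum hA ⟨i, hiA⟩ fun _ _ => abs_nonneg _]
  · push Not at hearly
    have hle : a ≤ tailSum x n := by
      refine hasSum_le (fun i => ?_) (hasSum_subtype_iff_indicator (f := fun i => |x i|).1 hA)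
        (hasSum_subtype_iff_indicator (f := fun i => |x i|).1 (hasSum_tailSum hx n))
      by_cases hiA : i ∈ A <;> by_cases hin : n < i
      · simp [hiA, hin]
      · simp [hiA, hin, hearly i hiA (not_lt.1 hin)]
      all_goals simp [hiA, indicator_nonneg]
    linarith

theorem infinite_rightIsolatedPoints_achSet_abs (hx : Summable fun n => |x n|)
    (hmono : ∀ᶠ n in atTop, |x (n + 1)| ≤ |x n|)
    (hbig : ∀ N : ℕ, ∃ n ≥ N, tailSum x n < |x n|) :
    (rightIsolatedPoints (achSet fun i => |x i|)).Infinite := by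
  set G := {n | (∀ i ≤ n, |x i| ≠ 0 → |x n| ≤ |x i|) ∧ tailSum x n < |x n|}
  have hG : G.Infinite := Nat.frequently_atTop_iff_infinite.1 <|
    ((frequently_atTop.2 hbig).and_eventually
      (eventually_le_of_ne_zero (fun _ => abs_nonneg _) hx.tendsto_atTop_zero hmono)).mono
      fun _ h => ⟨h.2, h.1⟩
  refine infinite_of_injOn_mapsTo ?_ (fun n hn => ⟨⟨Ioi n, hasSum_tailSum hx n⟩, |x n|, hn.2,
    disjoint_Ioo_tailSum_achSet_abs hx hn.1⟩) hG
  exact StrictAntiOn.injOn fun _ _ _ hn hmn => hn.2.trans_le (abs_le_tailSum hx hmn)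

theorem achSet_not_finUnion (x : ℕ → ℝ) (hx : Summable fun n => |x n|)
    (hmono : ∀ᶠ n in atTop, |x (n + 1)| ≤ |x n|)
    (hbig : ∀ N : ℕ, ∃ n ≥ N, tailSum x n < |x n|) :
    ¬ IsFinUnionClosedIntervals (achSet x) := by
  intro hS
  have hE : IsFinUnionClosedIntervals (achSet fun n => |x n|) := by
    rw [achSet_abs_eq_image hx]
    exact hS.image_const_sub _
  exact hE.finite_rightIsolatedPoints.not_infinite
    (infinite_rightIsolatedPoints_achSet_abs hx hmono hbig)
end

section
/- For the Guthrie–Nymann sequence b with b(2n−1) = 3/4ⁿ and b(2n) = 2/4ⁿ, the achievement set T = E(b) has nonempty interior but is not a finite union of closed intervals. -/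
open Set Filter Topology

/-- The Guthrie–Nymann sequence: `3/4, 2/4, 3/16, 2/16, 3/64, 2/64, …`,
i.e. `b (2n) = 3 / 4 ^ (n + 1)` and `b (2n + 1) = 2 / 4 ^ (n + 1)`. -/
noncomputable def gnSeq (n : ℕ) : ℝ :=
  if n % 2 = 0 then 3 / 4 ^ (n / 2 + 1) else 2 / 4 ^ (n / 2 + 1)

/-!
The achievement set of `gnSeq` consists of the numbers `∑ dₖ 4⁻ᵏ` with digits `dₖ ∈ {0, 2, 3, 5}`.
Because the digit `5` carries into the next place, every integer `m` with
`2 (4ᵏ - 1) ≤ 3m < 3 · 4ᵏ` has a `k`-digit expansion, so the finite subsums are dense in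
`[2/3, 1]`; the achievement set of a summable sequence is compact, hence contains `[2/3, 1]`.
On the other hand, the terms with index at least `2k + 2` sum to `(5/3) 4⁻⁽ᵏ⁺¹⁾`, while every
earlier term is at least `2 · 4⁻⁽ᵏ⁺¹⁾ = gnSeq (2k + 1)`, so each `gnSeq (2k + 1)` is the right end
of a gap.
These infinitely many boundary points rule out a finite union of intervals.
-/

section AchievementSet

variable {x : ℕ → ℝ}

lemma mem_achSet_iff_hasSum_indicator {a : ℝ} :
    a ∈ achSet x ↔ ∃ A : Set ℕ, HasSum (A.indicator x) a :=
  exists_congr fun _ => hasSum_subtype_iff_indicator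

lemma finset_sum_mem_achSet (x : ℕ → ℝ) (F : Finset ℕ) : ∑ i ∈ F, x i ∈ achSet x :=
  ⟨F, F.hasSum x⟩

lemma achSet_eq_range_tsum (hx : Summable x) :
    achSet x = range fun ε : ℕ → Bool => ∑' n, if ε n then x n else 0 := by
  classical
  ext a
  rw [mem_achSet_iff_hasSum_indicator]
  constructor
  · rintro ⟨A, hA⟩
    refine ⟨fun n => decide (n ∈ A), ?_⟩
    simpa [← Set.indicator_apply] using hA.tsum_eq
  · rintro ⟨ε, rfl⟩
    refine ⟨{n | ε n = true}, ?_⟩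
    have hind : {n | ε n = true}.indicator x = fun n => if ε n then x n else 0 := by
      funext n; simp [Set.indicator_apply]
    exact hind ▸ (hx.indicator _).hasSum

lemma isCompact_achSet (hx : Summable x) : IsCompact (achSet x) := by
  rw [achSet_eq_range_tsum hx]
  refine isCompact_range (continuous_tsum (fun n => ?_) hx.abs fun n ε => ?_)
  · exact (continuous_of_discreteTopology (f := fun b : Bool => if b then x n else 0)).comp
      (continuous_apply n)
  · cases ε n <;> simp

lemma exists_le_or_le_tsum_of_mem_achSet (hx₀ : 0 ≤ x) (hx : Summable x) (n : ℕ) {t : ℝ} (ht : t ∈ achSet x) :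
    (∃ j < n, x j ≤ t) ∨ t ≤ ∑' i, x (i + n) := by
  obtain ⟨A, hA⟩ := mem_achSet_iff_hasSum_indicator.mp ht
  have hind₀ : 0 ≤ A.indicator x := Set.indicator_nonneg fun i _ => hx₀ i
  by_cases hlow : ∃ j ∈ A, j < n
  · obtain ⟨j, hjA, hjn⟩ := hlow
    exact Or.inl ⟨j, hjn, Set.indicator_of_mem hjA x ▸ le_hasSum hA j fun i _ => hind₀ i⟩
  · simp only [not_exists, not_and, not_lt] at hlow
    have hzero : ∑ i ∈ Finset.range n, A.indicator x i = 0 :=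
      Finset.sum_eq_zero fun i hi => Set.indicator_of_notMem
        (fun hiA => (Finset.mem_range.mp hi).not_ge (hlow i hiA)) x
    have htail : HasSum (fun i => A.indicator x (i + n)) t := by
      simpa [hzero] using (hasSum_nat_add_iff' n).mpr hA
    refine Or.inr (hasSum_le (fun i => ?_) htail ((summable_nat_add_iff n).mpr hx).hasSum)
    exact Set.indicator_le_self' (fun i _ => hx₀ i) _

end AchievementSet

lemma IsFinUnionClosedIntervals.finite_frontier {S : Set ℝ} (hS : IsFinUnionClosedIntervals S) :
    (frontier S).Finite := by
  obtain ⟨s, rfl⟩ := hS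
  have hclosed : IsClosed (⋃ p ∈ s, Icc p.1 p.2) :=
    s.finite_toSet.isClosed_biUnion fun p _ => isClosed_Icc
  refine (s.finite_toSet.biUnion fun p _ => (finite_singleton p.2).insert p.1).subset fun z hz => ?_
  obtain ⟨p, hp, hzp⟩ := mem_iUnion₂.mp (hclosed.frontier_subset hz)
  refine mem_iUnion₂.mpr ⟨p, hp, ?_⟩
  by_contra hend
  simp only [mem_insert_iff, mem_singleton_iff, not_or] at hend
  have hzIoo : z ∈ Ioo p.1 p.2 :=
    ⟨lt_of_le_of_ne hzp.1 (Ne.symm hend.1), lt_of_le_of_ne hzp.2 hend.2⟩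
  rw [← interior_Icc] at hzIoo
  exact hz.2 (interior_mono (subset_biUnion_of_mem (u := fun p : ℝ × ℝ => Icc p.1 p.2) hp) hzIoo)

lemma gnSeq_nonneg : 0 ≤ gnSeq := fun n => by
  unfold gnSeq; split <;> positivity

lemma gnSeq_add_two_mul (n j : ℕ) : gnSeq (n + 2 * j) = gnSeq n / 4 ^ j := by
  unfold gnSeq
  rw [show (n + 2 * j) % 2 = n % 2 by omega, show (n + 2 * j) / 2 + 1 = n / 2 + 1 + j by omega,
    pow_add]
  split <;> rw [div_div]

lemma gnSeq_two_mul (k : ℕ) : gnSeq (2 * k) = 3 / 4 ^ (k + 1) := by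
  simp [gnSeq]

lemma gnSeq_two_mul_add_one (k : ℕ) : gnSeq (2 * k + 1) = 2 / 4 ^ (k + 1) := by
  simp [gnSeq, Nat.add_mod, Nat.add_div]

lemma hasSum_gnSeq : HasSum gnSeq (5 / 3) := by
  have hgeom : HasSum (fun k : ℕ => (1 / 4 : ℝ) ^ k) (4 / 3) := by
    convert hasSum_geometric_of_lt_one (r := (1 / 4 : ℝ)) (by norm_num) (by norm_num) using 1
    norm_num
  have heven : HasSum (fun k => gnSeq (2 * k)) (3 / 4 * (4 / 3)) := by
    rw [show (fun k => gnSeq (2 * k)) = fun k => 3 / 4 * (1 / 4 : ℝ) ^ k by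
      funext k; rw [gnSeq_two_mul, pow_succ', one_div_pow]; ring]
    exact hgeom.mul_left _
  have hodd : HasSum (fun k => gnSeq (2 * k + 1)) (2 / 4 * (4 / 3)) := by
    rw [show (fun k => gnSeq (2 * k + 1)) = fun k => 2 / 4 * (1 / 4 : ℝ) ^ k by
      funext k; rw [gnSeq_two_mul_add_one, pow_succ', one_div_pow]; ring]
    exact hgeom.mul_left _
  convert heven.even_add_odd hodd using 1
  norm_num

lemma tsum_gnSeq_add_two_mul (k : ℕ) : ∑' i, gnSeq (i + 2 * k) = 5 / 3 / 4 ^ k := by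
  simp_rw [gnSeq_add_two_mul, tsum_div_const, hasSum_gnSeq.tsum_eq]

lemma two_div_pow_le_gnSeq {j k : ℕ} (hj : j < 2 * k + 2) : 2 / 4 ^ (k + 1) ≤ gnSeq j := by
  have hpow : (4 : ℝ) ^ (j / 2 + 1) ≤ 4 ^ (k + 1) := pow_le_pow_right₀ (by norm_num) (by omega)
  unfold gnSeq
  split
  · calc (2 : ℝ) / 4 ^ (k + 1) ≤ 2 / 4 ^ (j / 2 + 1) := by gcongr
      _ ≤ 3 / 4 ^ (j / 2 + 1) := by gcongr; norm_num
  · gcongr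

lemma exists_subset_Ico_sum_gnSeq_eq (k : ℕ) {c : ℕ} (hc : c = 0 ∨ c = 2 ∨ c = 3 ∨ c = 5) :
    ∃ G ⊆ Finset.Ico (2 * k) (2 * k + 2), ∑ i ∈ G, gnSeq i = c / 4 ^ (k + 1) := by
  rcases hc with rfl | rfl | rfl | rfl
  · exact ⟨∅, by simp, by simp⟩
  · exact ⟨{2 * k + 1}, by simp, by simp [gnSeq_two_mul_add_one]⟩
  · exact ⟨{2 * k}, by simp, by simp [gnSeq_two_mul]⟩
  · refine ⟨{2 * k, 2 * k + 1}, fun i hi => ?_, ?_⟩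
    · simp only [Finset.mem_insert, Finset.mem_singleton] at hi
      simp only [Finset.mem_Ico]; omega
    rw [Finset.sum_pair (by omega), gnSeq_two_mul, gnSeq_two_mul_add_one]
    push_cast; ring

-- The digits `0, 2, 3, 5` cover all residues mod 4; the digit 5 carries 1 into the next place.
lemma exists_digit_decomposition {N m : ℕ} (hN : N % 3 = 1) (h₁ : 2 * (4 * N) ≤ 3 * m + 2)
    (h₂ : m < 4 * N) :
    ∃ q c, (c = 0 ∨ c = 2 ∨ c = 3 ∨ c = 5) ∧ m = 4 * q + c ∧ 2 * N ≤ 3 * q + 2 ∧ q < N := by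
  rcases (by omega : m % 4 = 0 ∨ m % 4 = 1 ∨ m % 4 = 2 ∨ m % 4 = 3) with h | h | h | h
  · exact ⟨m / 4, 0, by omega, by omega, by omega, by omega⟩
  · exact ⟨m / 4 - 1, 5, by omega, by omega, by omega, by omega⟩
  · exact ⟨m / 4, 2, by omega, by omega, by omega, by omega⟩
  · exact ⟨m / 4, 3, by omega, by omega, by omega, by omega⟩

lemma exists_finset_sum_gnSeq_eq_div (k : ℕ) {m : ℕ} (h₁ : 2 * 4 ^ k ≤ 3 * m + 2)
    (h₂ : m < 4 ^ k) : ∃ F ⊆ Finset.range (2 * k), ∑ i ∈ F, gnSeq i = m / 4 ^ k := by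
  induction k generalizing m with
  | zero => exact ⟨∅, by simp, by simp [Nat.lt_one_iff.mp h₂]⟩
  | succ k ih =>
    rw [pow_succ'] at h₁ h₂
    obtain ⟨q, c, hc, rfl, hq₁, hq₂⟩ :=
      exists_digit_decomposition (by simp [Nat.pow_mod]) h₁ h₂
    obtain ⟨F, hF, hFsum⟩ := ih hq₁ hq₂
    obtain ⟨G, hG, hGsum⟩ := exists_subset_Ico_sum_gnSeq_eq k hc
    have hFG : Disjoint F G := Finset.disjoint_left.mpr fun i hiF hiG => by
      have := hF hiF; have := hG hiG; simp only [Finset.mem_range, Finset.mem_Ico] at *; omega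
    refine ⟨F ∪ G, Finset.union_subset (fun i hi => ?_) (fun i hi => ?_), ?_⟩
    · have := hF hi; simp only [Finset.mem_range] at *; omega
    · have := hG hi; simp only [Finset.mem_range, Finset.mem_Ico] at *; omega
    · rw [Finset.sum_union hFG, hFsum, hGsum]
      push_cast; field_simp; ring

lemma Ioo_subset_achSet_gnSeq : Ioo (2 / 3 : ℝ) 1 ⊆ achSet gnSeq := by
  rintro x ⟨hx₁, hx₂⟩
  have htends : Tendsto (fun k : ℕ => (⌊x * 4 ^ k⌋₊ : ℝ) / 4 ^ k) atTop (𝓝 x) :=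
    (tendsto_nat_floor_mul_div_atTop (by linarith)).comp
      (tendsto_pow_atTop_atTop_of_one_lt (by norm_num))
  refine (isCompact_achSet hasSum_gnSeq.summable).isClosed.mem_of_tendsto htends
    (Eventually.of_forall fun k => ?_)
  have hpos : (0 : ℝ) < 4 ^ k := by positivity
  have hfloor := Nat.lt_floor_add_one (x * 4 ^ k)
  have hlow : 2 * 4 ^ k ≤ 3 * ⌊x * 4 ^ k⌋₊ + 2 := by
    have : ((2 * 4 ^ k : ℕ) : ℝ) < (3 * ⌊x * 4 ^ k⌋₊ + 3 : ℕ) := by push_cast; nlinarith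
    have := Nat.cast_lt.mp this; omega
  have hhigh : ⌊x * 4 ^ k⌋₊ < 4 ^ k :=
    (Nat.floor_lt (by positivity)).mpr (by push_cast; nlinarith)
  obtain ⟨F, -, hF⟩ := exists_finset_sum_gnSeq_eq_div k hlow hhigh
  exact hF ▸ finset_sum_mem_achSet gnSeq F

lemma disjoint_Ioo_achSet_gnSeq (k : ℕ) :
    Disjoint (Ioo (5 / 3 / 4 ^ (k + 1) : ℝ) (2 / 4 ^ (k + 1))) (achSet gnSeq) := by
  refine Set.disjoint_left.mpr fun t ⟨ht₁, ht₂⟩ ht => ?_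
  rcases exists_le_or_le_tsum_of_mem_achSet gnSeq_nonneg hasSum_gnSeq.summable (2 * k + 2) ht with ⟨j, hj, hjt⟩ | htail
  · exact ((two_div_pow_le_gnSeq hj).trans hjt).not_gt ht₂
  · rw [show 2 * k + 2 = 2 * (k + 1) by ring, tsum_gnSeq_add_two_mul] at htail
    linarith

lemma two_div_pow_mem_frontier_achSet_gnSeq (k : ℕ) :
    (2 / 4 ^ (k + 1) : ℝ) ∈ frontier (achSet gnSeq) := by
  have hmem : (2 / 4 ^ (k + 1) : ℝ) ∈ achSet gnSeq := by
    simpa [gnSeq_two_mul_add_one] using finset_sum_mem_achSet gnSeq {2 * k + 1}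
  have hlt : (5 / 3 / 4 ^ (k + 1) : ℝ) < 2 / 4 ^ (k + 1) := by gcongr; norm_num
  rw [frontier_eq_closure_inter_closure]
  refine ⟨subset_closure hmem, closure_mono (disjoint_Ioo_achSet_gnSeq k).subset_compl_right ?_⟩
  rw [closure_Ioo hlt.ne]
  exact right_mem_Icc.mpr hlt.le

theorem guthrie_nymann_cantorval :
    (interior (achSet gnSeq)).Nonempty ∧ ¬ IsFinUnionClosedIntervals (achSet gnSeq) := by
  refine ⟨⟨5 / 6, interior_maximal Ioo_subset_achSet_gnSeq isOpen_Ioo ⟨by norm_num, by norm_num⟩⟩,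
    fun hS => ?_⟩
  have hinj : Function.Injective fun k : ℕ => (2 / 4 ^ (k + 1) : ℝ) :=
    StrictAnti.injective fun a b hab => by gcongr; norm_num
  exact infinite_range_of_injective hinj
    (hS.finite_frontier.subset (range_subset_iff.mpr two_div_pow_mem_frontier_achSet_gnSeq))
end
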